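/- arXiv:2202.08760 — 3 statements merged into one kernel-verified Lean document; each statement's English description precedes it below -/
import Mathlib

section
/- Let K be a field of characteristic zero and d a K-derivation of the polynomial ring K[x_1,...,x_n]. If d has no Darboux polynomial (i.e., there is no non-constant f ∈ K[X] with d(f) = λ·f for some λ ∈ K[X]), then the field of rational constants of the extension of d to K(x_1,...,x_n) equals K. -/
open MvPolynomial

/-- If a `K`-derivation `d` of `K[x₁,…,xₙ]` (char `K` = 0) has no Darboux polynomial,
then the field of rational constants of its extension `D` to `K(x₁,…,xₙ)` is `K`. -/
theorem no_darboux_implies_trivial_rational_constants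
    (K : Type*) [Field K] [CharZero K] (n : ℕ)
    (d : Derivation K (MvPolynomial (Fin n) K) (MvPolynomial (Fin n) K))
    (D : Derivation K (FractionRing (MvPolynomial (Fin n) K))
      (FractionRing (MvPolynomial (Fin n) K)))
    (hD : ∀ p : MvPolynomial (Fin n) K,
      D (algebraMap (MvPolynomial (Fin n) K) (FractionRing (MvPolynomial (Fin n) K)) p)
        = algebraMap (MvPolynomial (Fin n) K) (FractionRing (MvPolynomial (Fin n) K)) (d p))
    (hnoDarboux : ¬ ∃ (f lam : MvPolynomial (Fin n) K),
      f ∉ Set.range (MvPolynomial.C : K → MvPolynomial (Fin n) K) ∧ d f = lam * f) :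
    ∀ q : FractionRing (MvPolynomial (Fin n) K),
      D q = 0 → q ∈ Set.range (algebraMap K (FractionRing (MvPolynomial (Fin n) K))) := by
  intro q hq
  obtain ⟨a, b, hrel, hmk⟩ := IsFractionRing.exists_reduced_fraction (MvPolynomial (Fin n) K) q
  have hb0 : (b : MvPolynomial (Fin n) K) ≠ 0 := nonZeroDivisors.coe_ne_zero b
  have hbF : algebraMap (MvPolynomial (Fin n) K) (FractionRing (MvPolynomial (Fin n) K)) (b : MvPolynomial (Fin n) K) ≠ 0 :=
    IsFractionRing.to_map_ne_zero_of_mem_nonZeroDivisors b.2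
  have hinj : Function.Injective (algebraMap (MvPolynomial (Fin n) K) (FractionRing (MvPolynomial (Fin n) K))) := IsFractionRing.injective (MvPolynomial (Fin n) K) (FractionRing (MvPolynomial (Fin n) K))
  have hq' : q * algebraMap (MvPolynomial (Fin n) K) (FractionRing (MvPolynomial (Fin n) K)) (b : MvPolynomial (Fin n) K) = algebraMap (MvPolynomial (Fin n) K) (FractionRing (MvPolynomial (Fin n) K)) a := by
    rw [← hmk]; exact IsLocalization.mk'_spec (FractionRing (MvPolynomial (Fin n) K)) a b
  -- differentiate
  have h1 : q * algebraMap (MvPolynomial (Fin n) K) (FractionRing (MvPolynomial (Fin n) K)) (d (b : MvPolynomial (Fin n) K)) = algebraMap (MvPolynomial (Fin n) K) (FractionRing (MvPolynomial (Fin n) K)) (d a) := by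
    have h := congrArg D hq'
    rw [Derivation.leibniz, hq, hD, hD, smul_zero, add_zero, smul_eq_mul] at h
    exact h
  -- key polynomial identity
  have key : a * d (b : MvPolynomial (Fin n) K) = d a * (b : MvPolynomial (Fin n) K) := by
    apply hinj
    rw [map_mul, map_mul, ← hq', ← h1]; ring
  -- b divides d b
  have hbd : (b : MvPolynomial (Fin n) K) ∣ d (b : MvPolynomial (Fin n) K) := by
    refine (IsRelPrime.dvd_of_dvd_mul_left hrel.symm ?_)
    exact ⟨d a, by linear_combination key⟩
  have hbC : (b : MvPolynomial (Fin n) K) ∈ Set.range (MvPolynomial.C : K → MvPolynomial (Fin n) K) := by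
    by_contra hb
    obtain ⟨c, hc⟩ := hbd
    exact hnoDarboux ⟨b, c, hb, by rw [hc]; ring⟩
  obtain ⟨β, hβ⟩ := hbC
  by_cases ha0 : a = 0
  · refine ⟨0, ?_⟩
    have hz : q = 0 := by
      have h := hq'
      rw [ha0, map_zero] at h
      exact (mul_eq_zero.mp h).resolve_right hbF
    rw [map_zero, hz]
  · have had : a ∣ d a := by
      refine (IsRelPrime.dvd_of_dvd_mul_left hrel ?_)
      exact ⟨d (b : MvPolynomial (Fin n) K), by linear_combination -key⟩
    have haC : a ∈ Set.range (MvPolynomial.C : K → MvPolynomial (Fin n) K) := by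
      by_contra hac
      obtain ⟨c, hc⟩ := had
      exact hnoDarboux ⟨a, c, hac, by rw [hc]; ring⟩
    obtain ⟨α, hα⟩ := haC
    refine ⟨α / β, ?_⟩
    have hqval : q = algebraMap (MvPolynomial (Fin n) K) (FractionRing (MvPolynomial (Fin n) K)) a / algebraMap (MvPolynomial (Fin n) K) (FractionRing (MvPolynomial (Fin n) K)) (b : MvPolynomial (Fin n) K) :=
      (eq_div_iff hbF).mpr hq'
    rw [map_div₀, hqval, ← hα, ← hβ]
    congr 1
end

section
/- Let d be a K-derivation of K[x_1,...,x_n], σ a K-algebra automorphism of K[X], and ξ ∈ K with σ^{-1}∘d∘σ = ξ·d. If f is a Darboux polynomial of d with cofactor λ, then for every i ≥ 0, σ^i(f) is a Darboux polynomial of d with cofactor ξ^i·σ^i(λ). -/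
open MvPolynomial

/-- If `σ⁻¹ ∘ d ∘ σ = ξ • d` and `f` is a Darboux polynomial of `d` with cofactor `lam`,
then each `σ^i f` is a Darboux polynomial of `d` with cofactor `ξ^i • σ^i lam`. -/
theorem darboux_of_twisted_automorphism
    (K : Type*) [Field K] [CharZero K] (n : ℕ)
    (d : Derivation K (MvPolynomial (Fin n) K) (MvPolynomial (Fin n) K))
    (σ : MvPolynomial (Fin n) K ≃ₐ[K] MvPolynomial (Fin n) K) (ξ : K)
    (hconj : ∀ p : MvPolynomial (Fin n) K, σ.symm (d (σ p)) = MvPolynomial.C ξ * d p)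
    (f lam : MvPolynomial (Fin n) K)
    (hf : f ∉ Set.range (MvPolynomial.C : K → MvPolynomial (Fin n) K))
    (hDarboux : d f = lam * f) :
    ∀ i : ℕ,
      (σ ^ i) f ∉ Set.range (MvPolynomial.C : K → MvPolynomial (Fin n) K) ∧
      d ((σ ^ i) f) = (MvPolynomial.C (ξ ^ i) * (σ ^ i) lam) * (σ ^ i) f := by
  have hσC : ∀ a : K, σ (MvPolynomial.C a) = MvPolynomial.C a := fun a => σ.commutes a
  have hconj' : ∀ p : MvPolynomial (Fin n) K,
      d (σ p) = MvPolynomial.C ξ * σ (d p) := by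
    intro p
    have := congrArg σ (hconj p)
    rw [σ.apply_symm_apply, map_mul, hσC] at this
    exact this
  intro i
  induction i with
  | zero =>
    exact ⟨by simpa using hf, by simpa using hDarboux⟩
  | succ i ih =>
    obtain ⟨ih1, ih2⟩ := ih
    have hpow : ∀ p : MvPolynomial (Fin n) K, (σ ^ (i + 1)) p = σ ((σ ^ i) p) := by
      intro p
      rw [pow_succ']
      rfl
    constructor
    · intro hc
      obtain ⟨a, ha⟩ := hc
      apply ih1
      refine ⟨a, ?_⟩
      have : σ ((σ ^ i) f) = σ (MvPolynomial.C a) := by rw [← hpow, ← ha, hσC]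
      exact (σ.injective this).symm
    · rw [hpow, hconj' ((σ ^ i) f), ih2, map_mul, map_mul, hσC, ← hpow lam, ← hpow f,
        pow_succ ξ, map_mul]
      ring
end

section
/- Let d be a homogeneous generalized cyclotomic derivation of K[S] of degree s-1 with blocks S_1,...,S_k, let N = 1+s+...+s^{k-1}, ξ a primitive N-th root of unity, q_i = Σ_{j=0}^{i} s^j, and let σ be the K-algebra automorphism of K[S] given by σ(x_{k-i,j}) = ξ^{q_i}·x_{k-i,j} for 0 ≤ i ≤ k-1. Then σ^{-1}∘d∘σ = ξ·d. -/
open MvPolynomial Finset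

/-! The conjugate `σ⁻¹ ∘ d ∘ σ` is again a derivation, so it suffices to compare it with `ξ • d` on
the variables. If `σ` scales `X x` by `c x`, then `σ⁻¹ (d (σ X_x)) = c x · ∏_y c_y ^ (-α x y) · d X_x`,
so one needs `c x = ξ · ∏_y c_y ^ α x y`. For `c x = ξ ^ q_i` this is the recursion
`q_{i+1} = 1 + s q_i` of the geometric sums, and at the wrap-around from the first block back to the
last, `q_0 = 1 ≡ 1 + s q_{k-1} (mod N)` because `q_{k-1} = N`. -/

namespace Derivation

variable {R A : Type*} [CommSemiring R] [CommRing A] [Algebra R A]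

def conjAlgEquiv (D : Derivation R A A) (e : A ≃ₐ[R] A) : Derivation R A A :=
  Derivation.mk' (e.symm.toLinearMap ∘ₗ D.toLinearMap ∘ₗ e.toLinearMap) fun a b => by
    simp only [LinearMap.comp_apply, AlgEquiv.toLinearMap_apply, coeFn_coe, map_mul, leibniz,
      smul_eq_mul, map_add, AlgEquiv.symm_apply_apply]

@[simp]
theorem conjAlgEquiv_apply (D : Derivation R A A) (e : A ≃ₐ[R] A) (a : A) :
    D.conjAlgEquiv e a = e.symm (D (e a)) :=
  rfl

end Derivation

namespace MvPolynomial

variable {ι K : Type*} [Field K] (σ : MvPolynomial ι K ≃ₐ[K] MvPolynomial ι K)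

theorem symm_X_eq_C_inv_mul {i : ι} {c : K} (hc : c ≠ 0) (h : σ (X i) = C c * X i) :
    σ.symm (X i) = C c⁻¹ * X i := by
  have hC : σ (C c⁻¹) = C c⁻¹ := σ.commutes c⁻¹
  rw [AlgEquiv.symm_apply_eq, map_mul, h, hC, ← mul_assoc, ← C_mul, inv_mul_cancel₀ hc, C_1,
    one_mul]

theorem symm_prod_X_pow [Fintype ι] {c : ι → K} (hc : ∀ i, c i ≠ 0)
    (h : ∀ i, σ (X i) = C (c i) * X i) (a : ι → ℕ) :
    σ.symm (∏ i, X i ^ a i) = C (∏ i, (c i)⁻¹ ^ a i) * ∏ i, X i ^ a i := by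
  simp only [map_prod, map_pow, symm_X_eq_C_inv_mul σ (hc _) (h _), mul_pow, prod_mul_distrib]

theorem conjAlgEquiv_eq_smul_of_X_eq_C_mul [Fintype ι]
    (d : Derivation K (MvPolynomial ι K) (MvPolynomial ι K)) {α : ι → ι → ℕ}
    (hd : ∀ i, d (X i) = ∏ j, X j ^ α i j) {c : ι → K} (hc : ∀ i, c i ≠ 0)
    (h : ∀ i, σ (X i) = C (c i) * X i) {ξ : K} (hξ : ∀ i, c i = ξ * ∏ j, c j ^ α i j) :
    d.conjAlgEquiv σ = ξ • d := by
  refine derivation_ext fun i => ?_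
  have hscalar : c i * ∏ j, (c j)⁻¹ ^ α i j = ξ := by
    rw [hξ i, mul_assoc, ← prod_mul_distrib, prod_congr rfl fun j _ => by rw [inv_pow, mul_inv_cancel₀ (pow_ne_zero _ (hc j))],
      prod_const_one, mul_one]
  rw [Derivation.conjAlgEquiv_apply, Derivation.smul_apply, h, ← smul_eq_C_mul, d.map_smul,
    map_smul, hd, symm_prod_X_pow σ hc h, smul_eq_C_mul, smul_eq_C_mul, ← mul_assoc,
    ← C_mul, hscalar]

end MvPolynomial

section CyclicWeights

variable {M : Type*} [Monoid M] (ξ : M) {s : ℕ} {q : ℕ → ℕ}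

theorem pow_geomSum_succ (hq : ∀ i, q i = ∑ j ∈ range (i + 1), s ^ j) (i : ℕ) :
    ξ ^ q (i + 1) = ξ * (ξ ^ q i) ^ s := by
  rw [hq, hq, geom_sum_succ, pow_succ', pow_mul']

theorem pow_geomSum_rev_eq_mul_pow_succ {k : ℕ} [NeZero k]
    (hq : ∀ i, q i = ∑ j ∈ range (i + 1), s ^ j) (hξ : ξ ^ q (k - 1) = 1) (b : Fin k) :
    ξ ^ q (k - 1 - b) = ξ * (ξ ^ q (k - 1 - ↑(b + 1))) ^ s := by
  obtain ⟨m, rfl⟩ := Nat.exists_eq_succ_of_ne_zero (NeZero.ne k)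
  rw [Fin.val_add_one]
  split_ifs with hb
  · subst hb
    simp only [Nat.succ_eq_add_one, Nat.add_sub_cancel] at hξ
    simp [hq 0, hξ]
  · have hbm : (b : ℕ) < m := Fin.val_lt_last hb
    rw [show m + 1 - 1 - (b : ℕ) = m + 1 - 1 - (b + 1) + 1 by omega, pow_geomSum_succ ξ hq]

end CyclicWeights

theorem genCyclotomic_conjugation_general
    (K : Type*) [Field K] (n k s : ℕ) [NeZero k]
    (N : ℕ) (hN : N = ∑ j ∈ range k, s ^ j)
    (ξ : K) (hξ : IsPrimitiveRoot ξ N)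
    (d : Derivation K (MvPolynomial (Fin n) K) (MvPolynomial (Fin n) K))
    (blk : Fin n → Fin k) (α : Fin n → Fin n → ℕ)
    (hdX : ∀ x : Fin n, d (MvPolynomial.X x) = ∏ y : Fin n, MvPolynomial.X y ^ α x y)
    (hblk : ∀ x y : Fin n, α x y ≠ 0 → blk y = blk x + 1)
    (hdeg : ∀ x : Fin n, ∑ y : Fin n, α x y = s)
    (q : ℕ → ℕ) (hq : ∀ i, q i = ∑ j ∈ range (i + 1), s ^ j)
    (σ : MvPolynomial (Fin n) K ≃ₐ[K] MvPolynomial (Fin n) K)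
    (hσ : ∀ x : Fin n, σ (MvPolynomial.X x)
      = MvPolynomial.C (ξ ^ q (k - 1 - (blk x : ℕ))) * MvPolynomial.X x) :
    ∀ p : MvPolynomial (Fin n) K, σ.symm (d (σ p)) = MvPolynomial.C ξ * d p := by
  have hN0 : N ≠ 0 := by
    rw [hN, ← Nat.succ_pred_eq_of_ne_zero (NeZero.ne k), sum_range_succ']
    simp
  have hξN : ξ ^ q (k - 1) = 1 := by
    rw [hq, Nat.sub_add_cancel NeZero.one_le, ← hN, hξ.pow_eq_one]
  have hcycle (x : Fin n) :
      ξ ^ q (k - 1 - blk x) = ξ * ∏ y, (ξ ^ q (k - 1 - blk y)) ^ α x y := by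
    have hnext (y : Fin n) : (ξ ^ q (k - 1 - blk y)) ^ α x y
        = (ξ ^ q (k - 1 - ↑(blk x + 1))) ^ α x y := by
      by_cases hxy : α x y = 0
      · simp [hxy]
      · rw [hblk x y hxy]
    rw [prod_congr rfl fun y _ => hnext y, prod_pow_eq_pow_sum, hdeg x]
    exact pow_geomSum_rev_eq_mul_pow_succ ξ hq hξN (blk x)
  have hconj := conjAlgEquiv_eq_smul_of_X_eq_C_mul σ d hdX
    (fun x => pow_ne_zero _ (hξ.ne_zero hN0)) hσ hcycle
  intro p
  simpa [smul_eq_C_mul] using DFunLike.congr_fun hconj p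

/-- For a homogeneous generalized cyclotomic derivation `d` (blocks `S_1,…,S_k`, each variable of
a block sent to a monomial of total degree `s` in the next block, cyclically), with
`N = 1 + s + ⋯ + s^(k-1)`, `ξ` a primitive `N`-th root of unity, `q_i = Σ_{j=0}^{i} s^j`, the
automorphism `σ` scaling the variables of block `S_{k-i}` by `ξ^(q_i)` satisfies
`σ⁻¹ ∘ d ∘ σ = ξ • d`.  (Block `S_b` of the paper corresponds to the fibre `blk x = b - 1`,
so block `S_{k-i}` is scaled by `ξ ^ q i` with `i = k - 1 - blk x`.) -/
theorem genCyclotomic_conjugation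
    (K : Type*) [Field K] [CharZero K] (n k s : ℕ) (hk : 2 ≤ k) (hs : 1 ≤ s) [NeZero k]
    (N : ℕ) (hN : N = ∑ j ∈ range k, s ^ j)
    (ξ : K) (hξ : IsPrimitiveRoot ξ N)
    (d : Derivation K (MvPolynomial (Fin n) K) (MvPolynomial (Fin n) K))
    (blk : Fin n → Fin k) (α : Fin n → Fin n → ℕ)
    (hdX : ∀ x : Fin n, d (MvPolynomial.X x) = ∏ y : Fin n, MvPolynomial.X y ^ α x y)
    (hblk : ∀ x y : Fin n, α x y ≠ 0 → blk y = blk x + 1)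
    (hdeg : ∀ x : Fin n, ∑ y : Fin n, α x y = s)
    (q : ℕ → ℕ) (hq : ∀ i, q i = ∑ j ∈ range (i + 1), s ^ j)
    (σ : MvPolynomial (Fin n) K ≃ₐ[K] MvPolynomial (Fin n) K)
    (hσ : ∀ x : Fin n, σ (MvPolynomial.X x)
      = MvPolynomial.C (ξ ^ q (k - 1 - (blk x : ℕ))) * MvPolynomial.X x) :
    ∀ p : MvPolynomial (Fin n) K, σ.symm (d (σ p)) = MvPolynomial.C ξ * d p :=
  genCyclotomic_conjugation_general K n k s N hN ξ hξ d blk α hdX hblk hdeg q hq σ hσ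
end
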